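/- arXiv:quant-ph/0608154 — 2 statements merged into one kernel-verified Lean document; each statement's English description precedes it below -/
import Mathlib

section
/- For the inhomogeneous Markov chain of path-integral Monte Carlo quantum annealing, there exists a time t1 > 0 such that for every state x ∈ S∖S_m (i.e. x is not a local maximum of F1) and every t ≥ t1, the diagonal transition probability satisfies G(x,x;t) ≥ w · g(1) · exp(−L0/T0 − L1/T1(t)). -/
open Finset Filter

namespace QAPaper

variable {S : Type*}

/-- A probability distribution on the finite state space `S`, viewed as a vector. -/
def IsProbVec [Fintype S] (p : S → ℝ) : Prop :=
  (∀ x, 0 ≤ p x) ∧ ∑ x, p x = 1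

/-- The ℓ¹ norm distance `‖p - p'‖ = ∑ₓ |p(x) - p'(x)|`. -/
noncomputable def dist1 [Fintype S] (p p' : S → ℝ) : ℝ := ∑ x, |p x - p' x|

/-- A column-stochastic matrix: entries nonnegative, columns sum to one. -/
def IsStochastic [Fintype S] (G : Matrix S S ℝ) : Prop :=
  (∀ y x, 0 ≤ G y x) ∧ ∀ x, ∑ y, G y x = 1

/-- `prodG G t t0 = G (t-1) * G (t-2) * ⋯ * G t0`. -/
noncomputable def prodG [Fintype S] [DecidableEq S] (G : ℕ → Matrix S S ℝ) (t t0 : ℕ) :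
    Matrix S S ℝ :=
  (((List.range (t - t0)).map fun k => G (t0 + k)).reverse).prod

/-- Weak ergodicity: the distribution forgets its initial condition. -/
def WeaklyErgodic [Fintype S] [DecidableEq S] (G : ℕ → Matrix S S ℝ) : Prop :=
  ∀ t0 : ℕ, ∀ ε > (0 : ℝ), ∃ T : ℕ, ∀ t ≥ T,
    ∀ p0 p0' : S → ℝ, IsProbVec p0 → IsProbVec p0' →
      dist1 ((prodG G t t0).mulVec p0) ((prodG G t t0).mulVec p0') ≤ ε

/-- Strong ergodicity towards a fixed distribution `r`. -/
def StronglyErgodicTo [Fintype S] [DecidableEq S] (G : ℕ → Matrix S S ℝ) (r : S → ℝ) : Prop :=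
  ∀ t0 : ℕ, ∀ ε > (0 : ℝ), ∃ T : ℕ, ∀ t ≥ T,
    ∀ p0 : S → ℝ, IsProbVec p0 → dist1 ((prodG G t t0).mulVec p0) r ≤ ε

/-- Strong ergodicity. -/
def StronglyErgodic [Fintype S] [DecidableEq S] (G : ℕ → Matrix S S ℝ) : Prop :=
  ∃ r : S → ℝ, IsProbVec r ∧ StronglyErgodicTo G r

/-- The coefficient of ergodicity `α(G)`. -/
noncomputable def ergCoeff [Fintype S] [Nonempty S] (G : Matrix S S ℝ) : ℝ :=
  1 - Finset.univ.inf' Finset.univ_nonempty fun p : S × S => ∑ z, min (G z p.1) (G z p.2)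

/-- A generation probability: symmetric, vanishing on the diagonal, columns summing
to one, and irreducible. -/
structure IsGenProb [Fintype S] (P : S → S → ℝ) : Prop where
  symm : ∀ x y, P y x = P x y
  nonneg : ∀ x y, 0 ≤ P y x
  diag_zero : ∀ x, P x x = 0
  sum_one : ∀ x, ∑ y, P y x = 1
  irreducible : ∀ x y : S, ∃ n > 0, ∃ z : ℕ → S,
    z 0 = x ∧ z n = y ∧ ∀ k < n, 0 < P (z (k + 1)) (z k)

/-- An acceptance function: monotone increasing, valued in `[0,1]`,
with `g (1/u) = g u / u`. -/
structure IsAcceptFn (g : ℝ → ℝ) : Prop where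
  mono : MonotoneOn g (Set.Ici (0 : ℝ))
  maps : ∀ u : ℝ, 0 ≤ u → g u ∈ Set.Icc (0 : ℝ) 1
  ratio : ∀ u : ℝ, 0 < u → g (1 / u) = g u / u

/-- Partition function `Z(t)`. -/
noncomputable def Zfun [Fintype S] (F0 F1 : S → ℝ) (T0 : ℝ) (T1 : ℕ → ℝ) (t : ℕ) : ℝ :=
  ∑ x, Real.exp (-(F0 x) / T0 - F1 x / T1 t)

/-- Time-dependent Boltzmann distribution `q(x;t)`. -/
noncomputable def qB [Fintype S] (F0 F1 : S → ℝ) (T0 : ℝ) (T1 : ℕ → ℝ) (t : ℕ) (x : S) : ℝ :=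
  Real.exp (-(F0 x) / T0 - F1 x / T1 t) / Zfun F0 F1 T0 T1 t

/-- Transition matrix built from a generation probability `P` and an
acceptance probability `A`. -/
noncomputable def GmatOf [Fintype S] [DecidableEq S] (P : S → S → ℝ) (A : ℕ → S → S → ℝ)
    (t : ℕ) : Matrix S S ℝ :=
  Matrix.of fun y x => if y = x then 1 - ∑ z, P z x * A t z x else P y x * A t y x

/-- Transition matrix of path-integral Monte Carlo quantum annealing. -/
noncomputable def Gpimc [Fintype S] [DecidableEq S] (P : S → S → ℝ) (g : ℝ → ℝ)
    (F0 F1 : S → ℝ) (T0 : ℝ) (T1 : ℕ → ℝ) : ℕ → Matrix S S ℝ :=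
  GmatOf P fun t y x => g (qB F0 F1 T0 T1 t y / qB F0 F1 T0 T1 t x)

/-- The set `S_m` of local maxima of `F1` with respect to `P`. -/
def Sm [Fintype S] (P : S → S → ℝ) (F1 : S → ℝ) : Set S :=
  {x | ∀ y, 0 < P y x → F1 y ≤ F1 x}

/-- `x` can reach `y` in exactly `n` elementary transitions. -/
def ReachIn (P : S → S → ℝ) (n : ℕ) (x y : S) : Prop :=
  ∃ f : ℕ → S, f 0 = x ∧ f n = y ∧ ∀ k < n, 0 < P (f (k + 1)) (f k)

/-- `d(y,x)`: the minimum number of transitions needed to go from `x` to `y`. -/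
noncomputable def dSteps (P : S → S → ℝ) (x y : S) : ℕ :=
  sInf {n | ReachIn P n x y}

/-- `R = min { max { d(y,x) | y ∈ S } | x ∈ S \ S_m }`. -/
noncomputable def Rnum [Fintype S] (P : S → S → ℝ) (F1 : S → ℝ) : ℕ :=
  sInf {r | ∃ x, x ∉ Sm P F1 ∧ r = Finset.univ.sup fun y => dSteps P x y}

/-- The maximum change of `F` in a single transition. -/
noncomputable def Lmax [Fintype S] (P : S → S → ℝ) (F : S → ℝ) : ℝ :=
  sSup {v | ∃ x y : S, 0 < P y x ∧ v = |F x - F y|}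

/-- The minimum nonvanishing value of the generation probability. -/
noncomputable def wmin [Fintype S] (P : S → S → ℝ) : ℝ :=
  sInf {v | ∃ x y : S, 0 < P y x ∧ v = P y x}

/-- The set of global minima of `F1`. -/
def S1min [Fintype S] (F1 : S → ℝ) : Set S := {x | ∀ y, F1 x ≤ F1 y}

/-- The limiting distribution: proportional to `exp (-F0 x / T0)` on the set of
global minima of `F1`, and zero elsewhere. -/
noncomputable def rLimit [Fintype S] (F0 F1 : S → ℝ) (T0 : ℝ) (x : S) : ℝ :=
  if ∀ y, F1 x ≤ F1 y then
    Real.exp (-(F0 x) / T0) /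
      ∑ y ∈ Finset.univ.filter (fun y => ∀ z, F1 y ≤ F1 z), Real.exp (-(F0 y) / T0)
  else 0

/-- The ±1 value of a Boolean spin. -/
noncomputable def spin (b : Bool) : ℝ := if b then 1 else -1

/-- Classical Ising energy `E0(x) = -∑_{i<j} J_ij x_i x_j`. -/
noncomputable def E0def (N : ℕ) (J : Fin N → Fin N → ℝ) (x : Fin N → Bool) : ℝ :=
  -∑ p ∈ Finset.univ.filter (fun p : Fin N × Fin N => p.1 < p.2),
    J p.1 p.2 * spin (x p.1) * spin (x p.2)

/-- Hamming distance between spin configurations. -/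
def hamming (N : ℕ) (x y : Fin N → Bool) : ℕ :=
  (Finset.univ.filter fun i => x i ≠ y i).card

/-- GFMC weight `w(x;t) = 1 - Δt (E0(x) - E_T) + N Δt Γ(t)`. -/
noncomputable def wgt (N : ℕ) (J : Fin N → Fin N → ℝ) (Δt ET : ℝ) (Γ : ℕ → ℝ) (t : ℕ)
    (x : Fin N → Bool) : ℝ :=
  1 - Δt * (E0def N J x - ET) + N * Δt * Γ t

/-- The normalized GFMC transition probability `G1(y,x;t)`. -/
noncomputable def G1mat (N : ℕ) (J : Fin N → Fin N → ℝ) (Δt ET : ℝ) (Γ : ℕ → ℝ) (t : ℕ) :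
    Matrix (Fin N → Bool) (Fin N → Bool) ℝ :=
  Matrix.of fun y x =>
    if y = x then 1 - N * Δt * Γ t / wgt N J Δt ET Γ t x
    else if hamming N x y = 1 then Δt * Γ t / wgt N J Δt ET Γ t x
    else 0

/-- `E_min = min { E0(x) | x ∈ S }`. -/
noncomputable def Emin (N : ℕ) (J : Fin N → Fin N → ℝ) : ℝ :=
  Finset.univ.inf' Finset.univ_nonempty (E0def N J)

/-- Stationary distribution `q(x;t) = w(x;t) / ∑_y w(y;t)` of GFMC. -/
noncomputable def qGFMC (N : ℕ) (J : Fin N → Fin N → ℝ) (Δt ET : ℝ) (Γ : ℕ → ℝ) (t : ℕ)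
    (x : Fin N → Bool) : ℝ :=
  wgt N J Δt ET Γ t x / ∑ y, wgt N J Δt ET Γ t y

/-- The alternative GFMC transition probability `G2(y,x;t)`. -/
noncomputable def G2mat (N : ℕ) (Δt : ℝ) (Γ : ℕ → ℝ) (t : ℕ) :
    Matrix (Fin N → Bool) (Fin N → Bool) ℝ :=
  Matrix.of fun y x =>
    (Real.cosh (Δt * Γ t) * Real.exp (-(Δt * Γ t))) ^ N *
      Real.tanh (Δt * Γ t) ^ hamming N x y

/-- Inverse hyperbolic tangent. -/
noncomputable def artanh (x : ℝ) : ℝ := (1 / 2) * Real.log ((1 + x) / (1 - x))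

/-- The cost function of the Suzuki–Trotter representation of the TFIM:
`F0(x) = -(β/M) ∑_k ∑_{ij} J_ij S_i^(k) S_j^(k)`. -/
noncomputable def F0tfim (N M : ℕ) (β : ℝ) (J : Fin (N + 1) → Fin (N + 1) → ℝ)
    (x : Fin (N + 1) × Fin M → Bool) : ℝ :=
  -(β / M) * ∑ k : Fin M, ∑ i : Fin (N + 1), ∑ j : Fin (N + 1),
    J i j * spin (x (i, k)) * spin (x (j, k))

/-- The kinetic term of the Suzuki–Trotter representation of the TFIM:
`F1(x) = -∑_k ∑_i S_i^(k) S_i^(k+1)` with periodic boundary along the Trotter direction. -/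
noncomputable def F1tfim (N M : ℕ) [NeZero M] (x : Fin (N + 1) × Fin M → Bool) : ℝ :=
  -∑ k : Fin M, ∑ i : Fin (N + 1), spin (x (i, k)) * spin (x (i, k + 1))

/-- The ferromagnetic coupling `γ(t) = (1/2) log coth (β Γ(t) / M)` between Trotter slices. -/
noncomputable def γtfim (M : ℕ) (β : ℝ) (Γ : ℕ → ℝ) (t : ℕ) : ℝ :=
  (1 / 2) * Real.log (1 / Real.tanh (β * Γ t / M))

/-- Tsallis-type generalized acceptance ratio `u(y,x;t)`. -/
noncomputable def uGen {S : Type*} (F0 F1 : S → ℝ) (T0 : ℝ) (T1 : ℕ → ℝ) (qp : ℝ) (t : ℕ)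
    (y x : S) : ℝ :=
  Real.exp (-(F0 y - F0 x) / T0) *
    (1 + (qp - 1) * (F1 y - F1 x) / T1 t) ^ (1 / (1 - qp))


private lemma exists_edge' [Fintype S] {P : S → S → ℝ} (hP : IsGenProb P) (x : S) :
    ∃ y, 0 < P y x := by
  by_contra h
  push_neg at h
  have h0 : ∀ y, P y x = 0 := fun y => le_antisymm (h y) (hP.nonneg x y)
  have := hP.sum_one x
  simp [h0] at this

private lemma Lmax_set_finite' [Fintype S] (P : S → S → ℝ) (F : S → ℝ) :
    {v | ∃ x y : S, 0 < P y x ∧ v = |F x - F y|}.Finite := by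
  apply Set.Finite.subset (Set.finite_range (fun p : S × S => |F p.1 - F p.2|))
  rintro v ⟨x, y, _, rfl⟩
  exact ⟨(x, y), rfl⟩

private lemma Lmax_ge' [Fintype S] {P : S → S → ℝ} (F : S → ℝ) {x y : S}
    (h : 0 < P y x) : |F x - F y| ≤ Lmax P F :=
  le_csSup (Lmax_set_finite' P F).bddAbove ⟨x, y, h, rfl⟩

private lemma wmin_set_finite' [Fintype S] (P : S → S → ℝ) :
    {v | ∃ x y : S, 0 < P y x ∧ v = P y x}.Finite := by
  apply Set.Finite.subset (Set.finite_range (fun p : S × S => P p.2 p.1))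
  rintro v ⟨x, y, _, rfl⟩
  exact ⟨(x, y), rfl⟩

private lemma wmin_le' [Fintype S] {P : S → S → ℝ} {x y : S}
    (h : 0 < P y x) : wmin P ≤ P y x :=
  csInf_le (wmin_set_finite' P).bddBelow ⟨x, y, h, rfl⟩

private lemma wmin_nonneg' [Fintype S] {P : S → S → ℝ} (hP : IsGenProb P) [Nonempty S] :
    0 ≤ wmin P := by
  obtain ⟨x⟩ := ‹Nonempty S›
  obtain ⟨y, hy⟩ := exists_edge' hP x
  refine le_csInf ⟨P y x, x, y, hy, rfl⟩ ?_
  rintro v ⟨a, b, hb, rfl⟩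
  exact (hP.nonneg a b)

private lemma g_le_self' {g : ℝ → ℝ} (hg : IsAcceptFn g) {u : ℝ} (hu : 0 < u) :
    g u ≤ u := by
  have h := hg.ratio u hu
  have h1 : g (1 / u) ≤ 1 := (hg.maps (1 / u) (by positivity)).2
  have h2 : g u = g (1 / u) * u := by
    rw [h, div_mul_cancel₀ _ hu.ne']
  rw [h2]
  calc g (1 / u) * u ≤ 1 * u := mul_le_mul_of_nonneg_right h1 hu.le
    _ = u := one_mul u

/-- Lemma 1, second part.  Lower bound on the diagonal transition
probabilities of path-integral Monte Carlo quantum annealing: there is a time `t1 > 0`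
such that `G(x,x;t) ≥ w g(1) exp(-L0/T0 - L1/T1(t))` for all `t ≥ t1` and all states
`x` that are not local maxima of `F1`. -/
theorem pimc_diag_lower_bound
    {S : Type*} [Fintype S] [DecidableEq S] [Nonempty S]
    (P : S → S → ℝ) (hP : IsGenProb P)
    (g : ℝ → ℝ) (hg : IsAcceptFn g)
    (F0 F1 : S → ℝ) (T0 : ℝ) (hT0 : 0 < T0)
    (T1 : ℕ → ℝ) (hT1pos : ∀ t, 0 < T1 t) (hT1anti : Antitone T1)
    (hT1lim : Tendsto T1 atTop (nhds 0))
    (hne : ∃ x : S, x ∉ Sm P F1) :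
    ∃ t1 : ℕ, 0 < t1 ∧ ∀ x : S, x ∉ Sm P F1 → ∀ t : ℕ, t ≥ t1 →
      Gpimc P g F0 F1 T0 T1 t x x ≥
        wmin P * g 1 * Real.exp (-(Lmax P F0) / T0 - Lmax P F1 / T1 t) := by
  classical
  -- the finset of edges where F1 strictly increases
  set D : Finset (S × S) :=
    Finset.univ.filter (fun p : S × S => 0 < P p.2 p.1 ∧ F1 p.1 < F1 p.2) with hDdef
  have hDne : D.Nonempty := by
    obtain ⟨x0, hx0⟩ := hne
    simp only [Sm, Set.mem_setOf_eq, not_forall] at hx0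
    obtain ⟨y, hy, hlt⟩ := hx0
    exact ⟨(x0, y), by simp [hDdef, hy, lt_of_not_ge hlt]⟩
  set δ : ℝ := D.inf' hDne (fun p => F1 p.2 - F1 p.1) with hδdef
  have hδpos : 0 < δ := by
    rw [hδdef, Finset.lt_inf'_iff]
    intro p hp
    simp only [hDdef, Finset.mem_filter] at hp
    linarith [hp.2.2]
  have hL0 : 0 ≤ Lmax P F0 := by
    obtain ⟨p, hp⟩ := hDne
    simp only [hDdef, Finset.mem_filter] at hp
    exact le_trans (abs_nonneg _) (Lmax_ge' F0 hp.2.1)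
  have hL1δ : δ ≤ Lmax P F1 := by
    obtain ⟨p, hp⟩ := hDne
    have hmem := hp
    simp only [hDdef, Finset.mem_filter] at hp
    calc δ ≤ F1 p.2 - F1 p.1 := Finset.inf'_le _ hmem
      _ ≤ |F1 p.1 - F1 p.2| := by rw [abs_sub_comm]; exact le_abs_self _
      _ ≤ Lmax P F1 := Lmax_ge' F1 hp.2.1
  -- the bounding sequence
  have hTinv : Tendsto (fun t => (T1 t)⁻¹) atTop atTop := by
    apply tendsto_inv_nhdsGT_zero.comp
    rw [tendsto_nhdsWithin_iff]
    exact ⟨hT1lim, Filter.Eventually.of_forall fun t => hT1pos t⟩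
  have hdiv : Tendsto (fun t => δ / T1 t) atTop atTop := by
    simpa [div_eq_mul_inv] using hTinv.const_mul_atTop hδpos
  have hb : Tendsto (fun t => Lmax P F0 / T0 - δ / T1 t) atTop atBot := by
    simp only [sub_eq_add_neg]
    exact tendsto_atBot_add_const_left _ _ (tendsto_neg_atTop_atBot.comp hdiv)
  have ha : Tendsto (fun t => Real.exp (Lmax P F0 / T0 - δ / T1 t)) atTop (nhds 0) :=
    Real.tendsto_exp_atBot.comp hb
  have hev : ∀ᶠ t in atTop, Real.exp (Lmax P F0 / T0 - δ / T1 t) ≤ 1 / 2 := by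
    have := ha.eventually_le_const (show (0:ℝ) < 1/2 by norm_num)
    exact this
  obtain ⟨t1', ht1'⟩ := eventually_atTop.1 hev
  refine ⟨max t1' 1, lt_of_lt_of_le one_pos (le_max_right _ _), ?_⟩
  intro x hx t ht
  have hax : Real.exp (Lmax P F0 / T0 - δ / T1 t) ≤ 1 / 2 :=
    ht1' t (le_trans (le_max_left _ _) ht)
  -- pick an uphill neighbor of x
  simp only [Sm, Set.mem_setOf_eq, not_forall] at hx
  obtain ⟨y, hPyx, hlt⟩ := hx
  have hF1 : F1 x < F1 y := lt_of_not_ge hlt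
  have hyD : (x, y) ∈ D := by simp [hDdef, hPyx, hF1]
  have hδy : δ ≤ F1 y - F1 x := Finset.inf'_le _ hyD
  -- basic facts about the Boltzmann ratio
  have hZ : 0 < Zfun F0 F1 T0 T1 t :=
    Finset.sum_pos (fun _ _ => Real.exp_pos _) Finset.univ_nonempty
  have hratio : ∀ z : S, qB F0 F1 T0 T1 t z / qB F0 F1 T0 T1 t x
      = Real.exp ((-(F0 z) / T0 - F1 z / T1 t) - (-(F0 x) / T0 - F1 x / T1 t)) := by
    intro z
    rw [qB, qB, div_div_div_comm, div_self hZ.ne', div_one, ← Real.exp_sub]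
  set A : S → ℝ := fun z => g (qB F0 F1 T0 T1 t z / qB F0 F1 T0 T1 t x) with hAdef
  have hAle1 : ∀ z, A z ≤ 1 := by
    intro z
    exact (hg.maps _ (by rw [hratio z]; positivity)).2
  -- exponent bound for the chosen neighbor y
  have hE : (-(F0 y) / T0 - F1 y / T1 t) - (-(F0 x) / T0 - F1 x / T1 t)
      ≤ Lmax P F0 / T0 - δ / T1 t := by
    have e1 : F0 x - F0 y ≤ Lmax P F0 :=
      le_trans (le_abs_self _) (Lmax_ge' F0 hPyx)
    have e2 : F1 x - F1 y ≤ -δ := by linarith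
    have h1 : (F0 x - F0 y) / T0 ≤ Lmax P F0 / T0 := by
      apply div_le_div_of_nonneg_right e1 hT0.le
    have h2 : (F1 x - F1 y) / T1 t ≤ (-δ) / T1 t :=
      div_le_div_of_nonneg_right e2 (hT1pos t).le
    have heq : (-(F0 y) / T0 - F1 y / T1 t) - (-(F0 x) / T0 - F1 x / T1 t)
        = (F0 x - F0 y) / T0 + (F1 x - F1 y) / T1 t := by ring
    have hneg : (-δ) / T1 t = -(δ / T1 t) := neg_div _ _
    rw [heq]
    linarith [h1, h2, hneg.le, hneg.ge]
  have hAy : A y ≤ Real.exp (Lmax P F0 / T0 - δ / T1 t) := by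
    rw [hAdef]
    calc g (qB F0 F1 T0 T1 t y / qB F0 F1 T0 T1 t x)
        ≤ qB F0 F1 T0 T1 t y / qB F0 F1 T0 T1 t x := by
          apply g_le_self' hg
          rw [hratio y]; positivity
      _ = Real.exp ((-(F0 y) / T0 - F1 y / T1 t) - (-(F0 x) / T0 - F1 x / T1 t)) := hratio y
      _ ≤ Real.exp (Lmax P F0 / T0 - δ / T1 t) := Real.exp_le_exp.2 hE
  -- bound on the right-hand side
  have hRHS : g 1 * Real.exp (-(Lmax P F0) / T0 - Lmax P F1 / T1 t)
      ≤ Real.exp (Lmax P F0 / T0 - δ / T1 t) := by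
    have hg1 : g 1 ≤ 1 := (hg.maps 1 one_pos.le).2
    have hexp : Real.exp (-(Lmax P F0) / T0 - Lmax P F1 / T1 t)
        ≤ Real.exp (Lmax P F0 / T0 - δ / T1 t) := by
      apply Real.exp_le_exp.2
      have d1 : -(Lmax P F0) / T0 ≤ Lmax P F0 / T0 :=
        div_le_div_of_nonneg_right (by linarith) hT0.le
      have d2 : δ / T1 t ≤ Lmax P F1 / T1 t :=
        div_le_div_of_nonneg_right hL1δ (hT1pos t).le
      linarith
    calc g 1 * Real.exp (-(Lmax P F0) / T0 - Lmax P F1 / T1 t)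
        ≤ 1 * Real.exp (-(Lmax P F0) / T0 - Lmax P F1 / T1 t) :=
          mul_le_mul_of_nonneg_right hg1 (Real.exp_pos _).le
      _ = Real.exp (-(Lmax P F0) / T0 - Lmax P F1 / T1 t) := one_mul _
      _ ≤ Real.exp (Lmax P F0 / T0 - δ / T1 t) := hexp
  have hkey : g 1 * Real.exp (-(Lmax P F0) / T0 - Lmax P F1 / T1 t) ≤ 1 - A y := by
    have : A y ≤ 1 / 2 := le_trans hAy hax
    have := le_trans hRHS hax
    linarith
  -- assemble
  have hGxx : Gpimc P g F0 F1 T0 T1 t x x = ∑ z, P z x * (1 - A z) := by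
    have h1 : Gpimc P g F0 F1 T0 T1 t x x = 1 - ∑ z, P z x * A z := by
      simp [Gpimc, GmatOf, hAdef]
    have h2 : ∑ z, P z x * (1 - A z) = (∑ z, P z x) - ∑ z, P z x * A z := by
      rw [← Finset.sum_sub_distrib]
      exact Finset.sum_congr rfl fun z _ => by ring
    rw [h1, h2, hP.sum_one x]
  rw [ge_iff_le, hGxx]
  have hterm : wmin P * g 1 * Real.exp (-(Lmax P F0) / T0 - Lmax P F1 / T1 t)
      ≤ P y x * (1 - A y) := by
    have h1 : wmin P * g 1 * Real.exp (-(Lmax P F0) / T0 - Lmax P F1 / T1 t)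
        ≤ wmin P * (1 - A y) := by
      rw [mul_assoc]
      exact mul_le_mul_of_nonneg_left hkey (wmin_nonneg' hP)
    have h1Ay : 0 ≤ 1 - A y := by linarith [hAle1 y]
    have h2 : wmin P * (1 - A y) ≤ P y x * (1 - A y) :=
      mul_le_mul_of_nonneg_right (wmin_le' hPyx) h1Ay
    linarith
  refine le_trans hterm ?_
  apply Finset.single_le_sum (f := fun z => P z x * (1 - A z)) ?_ (Finset.mem_univ y)
  intro z _
  exact mul_nonneg (hP.nonneg x z) (by linarith [hAle1 z])

end QAPaper
end

section
/- The inhomogeneous Markov chain of path-integral Monte Carlo quantum annealing is weakly ergodic if the annealing schedule satisfies T1(t) ≥ R·L1 / log(t+2) for all t ≥ 0. -/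
open Finset Filter

namespace QAPaper

variable {S : Type*}

lemma prodG_self [Fintype S] [DecidableEq S] (G : ℕ → Matrix S S ℝ) (t0 : ℕ) :
    prodG G t0 t0 = 1 := by
  simp [prodG]

lemma prodG_succ [Fintype S] [DecidableEq S] (G : ℕ → Matrix S S ℝ) (t0 n : ℕ) :
    prodG G (t0 + (n+1)) t0 = G (t0 + n) * prodG G (t0 + n) t0 := by
  simp [prodG, Nat.add_sub_cancel_left, List.range_succ]

lemma prodG_eq [Fintype S] [DecidableEq S] (G : ℕ → Matrix S S ℝ) {t t0 : ℕ} (h : t0 ≤ t) :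
    prodG G t t0 = prodG G (t0 + (t - t0)) t0 := by
  rw [Nat.add_sub_cancel' h]

lemma IsStochastic.mul [Fintype S] {M N : Matrix S S ℝ} (hM : IsStochastic M)
    (hN : IsStochastic N) : IsStochastic (M * N) := by
  constructor
  · intro y x
    exact Finset.sum_nonneg fun z _ => mul_nonneg (hM.1 y z) (hN.1 z x)
  · intro x
    simp only [Matrix.mul_apply]
    rw [Finset.sum_comm]
    simp only [← Finset.sum_mul, hM.2, one_mul, hN.2]

lemma prodG_stochastic [Fintype S] [DecidableEq S] (G : ℕ → Matrix S S ℝ)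
    (hG : ∀ s, IsStochastic (G s)) (t t0 : ℕ) : IsStochastic (prodG G t t0) := by
  rcases le_or_gt t0 t with h | h
  · rw [prodG_eq G h]
    generalize t - t0 = n
    induction n with
    | zero =>
        refine ⟨fun y x => ?_, fun x => ?_⟩ <;>
          simp [prodG_self, Matrix.one_apply] <;> positivity
    | succ n ih => rw [prodG_succ]; exact (hG _).mul ih
  · have : t - t0 = 0 := Nat.sub_eq_zero_of_le h.le
    have h0 : prodG G t t0 = 1 := by simp [prodG, this]
    rw [h0]
    refine ⟨fun y x => ?_, fun x => ?_⟩ <;> simp [Matrix.one_apply] <;> positivity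

lemma mulVec_sum_zero [Fintype S] {M : Matrix S S ℝ} (hM : IsStochastic M)
    {v : S → ℝ} (hv : ∑ x, v x = 0) : ∑ y, M.mulVec v y = 0 := by
  simp only [Matrix.mulVec, dotProduct]
  rw [Finset.sum_comm]
  simp only [← Finset.sum_mul, hM.2, one_mul]
  exact hv

lemma contraction [Fintype S] [DecidableEq S] {M : Matrix S S ℝ} (hM : IsStochastic M)
    {δ : ℝ} (hδ0 : 0 ≤ δ) {xs : S} (hrow : ∀ x, δ ≤ M xs x)
    {v : S → ℝ} (hv : ∑ x, v x = 0) :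
    ∑ y, |M.mulVec v y| ≤ (1 - δ) * ∑ x, |v x| := by
  set H : Matrix S S ℝ := Matrix.of fun y x => M y x - δ * (if y = xs then 1 else 0) with hH
  have hHnn : ∀ y x, 0 ≤ H y x := by
    intro y x
    simp only [hH, Matrix.of_apply]
    split
    · subst ‹y = xs›; simpa using sub_nonneg.2 (hrow x)
    · simpa using hM.1 y x
  have hMv : ∀ y, M.mulVec v y = ∑ x, H y x * v x := by
    intro y
    simp only [Matrix.mulVec, dotProduct, hH, Matrix.of_apply, sub_mul]
    rw [Finset.sum_sub_distrib]
    simp only [mul_assoc, ← Finset.mul_sum, hv, mul_zero, sub_zero]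
  calc ∑ y, |M.mulVec v y| ≤ ∑ y, ∑ x, H y x * |v x| := by
        refine Finset.sum_le_sum fun y _ => ?_
        rw [hMv y]
        refine (Finset.abs_sum_le_sum_abs _ _).trans ?_
        refine Finset.sum_le_sum fun x _ => ?_
        rw [abs_mul, abs_of_nonneg (hHnn y x)]
    _ = ∑ x, (∑ y, H y x) * |v x| := by
        rw [Finset.sum_comm]; simp [Finset.sum_mul]
    _ ≤ (1 - δ) * ∑ x, |v x| := by
        rw [Finset.mul_sum]
        refine Finset.sum_le_sum fun x _ => ?_
        have : ∑ y, H y x = 1 - δ := by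
          simp only [hH, Matrix.of_apply]
          rw [Finset.sum_sub_distrib, hM.2]
          simp
        rw [this]

lemma prod_entry_ge [Fintype S] [DecidableEq S] (G : ℕ → Matrix S S ℝ)
    (hG : ∀ s, IsStochastic (G s)) (s : ℕ) (z : ℕ → S) :
    ∀ n : ℕ, ∏ k ∈ Finset.range n, (G (s + k)) (z (k+1)) (z k) ≤ (prodG G (s + n) s) (z n) (z 0) := by
  intro n
  induction n with
  | zero => simp [prodG_self, Matrix.one_apply]
  | succ n ih =>
    rw [prodG_succ, Finset.prod_range_succ, Matrix.mul_apply]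
    calc (∏ k ∈ Finset.range n, G (s + k) (z (k+1)) (z k)) * G (s + n) (z (n+1)) (z n)
        ≤ (prodG G (s + n) s) (z n) (z 0) * G (s + n) (z (n+1)) (z n) := by
          refine mul_le_mul_of_nonneg_right ih ((hG _).1 _ _)
      _ = G (s + n) (z (n+1)) (z n) * (prodG G (s + n) s) (z n) (z 0) := mul_comm _ _
      _ ≤ ∑ w, G (s + n) (z (n+1)) w * (prodG G (s + n) s) w (z 0) := by
          refine Finset.single_le_sum (f := fun w => G (s + n) (z (n+1)) w * (prodG G (s + n) s) w (z 0)) (fun w _ => mul_nonneg ((hG _).1 _ _) ((prodG_stochastic G hG _ _).1 _ _)) (Finset.mem_univ _)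


lemma IsAcceptFn.min_le {g : ℝ → ℝ} (hg : IsAcceptFn g) {u : ℝ} (hu : 0 < u) :
    g 1 * min u 1 ≤ g u := by
  rcases le_total u 1 with h | h
  · have h1 : (1:ℝ) ≤ 1/u := by rw [le_div_iff₀ hu]; simpa
    have hmono : g 1 ≤ g (1/u) :=
      hg.mono (Set.mem_Ici.2 zero_le_one) (Set.mem_Ici.2 (le_trans zero_le_one h1)) h1
    have hr := hg.ratio u hu
    rw [min_eq_left h]
    have h2 : g 1 * u ≤ g (1/u) * u := mul_le_mul_of_nonneg_right hmono hu.le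
    rw [hr, div_mul_cancel₀ _ hu.ne'] at h2
    exact h2
  · rw [min_eq_right h, mul_one]
    exact hg.mono (Set.mem_Ici.2 zero_le_one) (Set.mem_Ici.2 (le_trans zero_le_one h)) h

lemma IsAcceptFn.le_self {g : ℝ → ℝ} (hg : IsAcceptFn g) {u : ℝ} (hu : 0 < u) (h1 : u ≤ 1) :
    g u ≤ u := by
  have hr := hg.ratio u hu
  have h2 : g (1/u) ≤ 1 := (hg.maps _ (by positivity)).2
  rw [hr, div_le_one hu] at h2
  exact h2

lemma ReachIn.symm [Fintype S] {P : S → S → ℝ} (hsymm : ∀ x y, P y x = P x y)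
    {n : ℕ} {x y : S} (h : ReachIn P n x y) : ReachIn P n y x := by
  obtain ⟨f, hf0, hfn, hstep⟩ := h
  refine ⟨fun k => f (n - k), by simp [hfn], by simp [hf0], fun k hk => ?_⟩
  have h1 : n - k = (n - (k+1)) + 1 := by omega
  show 0 < P (f (n - (k+1))) (f (n - k))
  rw [h1, hsymm]
  exact hstep _ (by omega)

lemma prodG_succ' [Fintype S] [DecidableEq S] (G : ℕ → Matrix S S ℝ) {t0 t : ℕ} (h : t0 ≤ t) :
    prodG G (t+1) t0 = G t * prodG G t t0 := by
  have h1 : t0 + ((t - t0) + 1) = t + 1 := by omega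
  have h2 : t0 + (t - t0) = t := by omega
  have h3 := prodG_succ G t0 (t - t0)
  rw [h1, h2] at h3
  exact h3

lemma prodG_mul [Fintype S] [DecidableEq S] (G : ℕ → Matrix S S ℝ) {t0 t1 t : ℕ}
    (h01 : t0 ≤ t1) (h1t : t1 ≤ t) :
    prodG G t t0 = prodG G t t1 * prodG G t1 t0 := by
  obtain ⟨m, rfl⟩ := Nat.exists_eq_add_of_le h1t
  clear h1t
  induction m with
  | zero => rw [Nat.add_zero, prodG_self, one_mul]
  | succ m ih =>
    have e1 : t1 + (m + 1) = (t1 + m) + 1 := by omega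
    rw [e1, prodG_succ' G (by omega : t0 ≤ t1 + m), prodG_succ' G (by omega : t1 ≤ t1 + m),
      ih, mul_assoc]


/-- The inhomogeneous Markov chain of path-integral Monte Carlo
quantum annealing is weakly ergodic under the annealing schedule
`T1(t) ≥ R L1 / log (t+2)`. -/
theorem pimc_weaklyErgodic
    {S : Type*} [Fintype S] [DecidableEq S] [Nonempty S]
    (P : S → S → ℝ) (hP : IsGenProb P)
    (g : ℝ → ℝ) (hg : IsAcceptFn g) (hg1 : 0 < g 1)
    (F0 F1 : S → ℝ) (T0 : ℝ) (hT0 : 0 < T0)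
    (T1 : ℕ → ℝ) (hT1pos : ∀ t, 0 < T1 t) (hT1anti : Antitone T1)
    (hT1lim : Tendsto T1 atTop (nhds 0))
    (hne : ∃ x : S, x ∉ Sm P F1) (hL1 : 0 < Lmax P F1)
    (hsched : ∀ t : ℕ, T1 t ≥ (Rnum P F1 : ℝ) * Lmax P F1 / Real.log ((t : ℝ) + 2)) :
    WeaklyErgodic (Gpimc P g F0 F1 T0 T1) := by
  classical
  obtain ⟨x0⟩ := ‹Nonempty S›
  set L := Lmax P F1 with hLdef
  set R := Rnum P F1 with hRdef
  set Gp := Gpimc P g F0 F1 T0 T1 with hGpdef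
  have hPnn : ∀ u w : S, 0 ≤ P u w := fun u w => hP.nonneg w u
  set A : ℕ → S → S → ℝ := fun t y x => g (qB F0 F1 T0 T1 t y / qB F0 F1 T0 T1 t x) with hA
  have hqb : ∀ (t : ℕ) (x y : S), qB F0 F1 T0 T1 t y / qB F0 F1 T0 T1 t x
      = Real.exp ((F0 x - F0 y)/T0 + (F1 x - F1 y)/T1 t) := by
    intro t x y
    have hZ : 0 < Zfun F0 F1 T0 T1 t :=
      Finset.sum_pos (fun _ _ => Real.exp_pos _) Finset.univ_nonempty
    rw [qB, qB, div_div_div_comm, div_self hZ.ne', div_one, ← Real.exp_sub]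
    congr 1
    ring
  have hA01 : ∀ t y x, 0 ≤ A t y x ∧ A t y x ≤ 1 := by
    intro t y x
    have hqpos : 0 ≤ qB F0 F1 T0 T1 t y / qB F0 F1 T0 T1 t x := by
      rw [hqb]; exact (Real.exp_pos _).le
    exact ⟨(hg.maps _ hqpos).1, (hg.maps _ hqpos).2⟩
  have hGpapp : ∀ t y x, Gp t y x =
      if y = x then 1 - ∑ z, P z x * A t z x else P y x * A t y x := by
    intro t y x
    simp only [hGpdef, hA, Gpimc, GmatOf, Matrix.of_apply]
  have hGpS : ∀ t, IsStochastic (Gp t) := by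
    intro t
    constructor
    · intro y x
      rw [hGpapp]
      split
      · have hle : ∑ z, P z x * A t z x ≤ 1 := by
          calc ∑ z, P z x * A t z x ≤ ∑ z, P z x :=
                Finset.sum_le_sum fun z _ =>
                  mul_le_of_le_one_right (hPnn z x) (hA01 t z x).2
            _ = 1 := hP.sum_one x
        linarith
      · exact mul_nonneg (hPnn _ _) (hA01 t _ _).1
    · intro x
      rw [← Finset.add_sum_erase _ _ (Finset.mem_univ x)]
      have e1 : ∑ y ∈ Finset.univ.erase x, Gp t y x
          = (∑ z, P z x * A t z x) - P x x * A t x x := by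
        rw [show ∑ y ∈ Finset.univ.erase x, Gp t y x
            = ∑ y ∈ Finset.univ.erase x, P y x * A t y x from
          Finset.sum_congr rfl fun y hy => by
            rw [hGpapp, if_neg (Finset.mem_erase.1 hy).1]]
        rw [Finset.sum_erase_eq_sub (Finset.mem_univ x)]
      rw [e1, hGpapp, if_pos rfl, hP.diag_zero]
      ring
  -- bound on F1 differences
  have hbdd : BddAbove {v | ∃ x y : S, 0 < P y x ∧ v = |F1 x - F1 y|} := by
    apply Set.Finite.bddAbove
    apply Set.Finite.subset (Set.finite_range (fun p : S × S => |F1 p.1 - F1 p.2|))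
    rintro v ⟨x, y, _, rfl⟩
    exact ⟨(x, y), rfl⟩
  have hLb : ∀ x y, 0 < P y x → |F1 x - F1 y| ≤ L := fun x y h =>
    le_csSup hbdd ⟨x, y, h, rfl⟩
  -- constants
  set c0 : ℝ := Finset.univ.inf' Finset.univ_nonempty
      (fun p : S × S => Real.exp ((F0 p.2 - F0 p.1)/T0)) with hc0def
  have hc0pos : 0 < c0 := (Finset.lt_inf'_iff _).2 fun p _ => Real.exp_pos _
  have hc0le : ∀ x y : S, c0 ≤ Real.exp ((F0 x - F0 y)/T0) := fun x y =>
    Finset.inf'_le _ (Finset.mem_univ (y, x))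
  have hc0le1 : c0 ≤ 1 := by
    calc c0 ≤ Real.exp ((F0 x0 - F0 x0)/T0) := hc0le x0 x0
      _ = 1 := by simp
  have hPpos : ∃ p : S × S, 0 < P p.1 p.2 := by
    by_contra h
    push_neg at h
    have h0 : ∑ y, P y x0 = 0 :=
      Finset.sum_eq_zero fun y _ => le_antisymm (h (y, x0)) (hPnn y x0)
    rw [hP.sum_one] at h0
    norm_num at h0
  have hposP : (Finset.univ.filter (fun p : S × S => 0 < P p.1 p.2)).Nonempty :=
    ⟨hPpos.choose, Finset.mem_filter.2 ⟨Finset.mem_univ _, hPpos.choose_spec⟩⟩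
  set cP : ℝ := (Finset.univ.filter (fun p : S × S => 0 < P p.1 p.2)).inf' hposP
      (fun p => P p.1 p.2) with hcPdef
  have hcPpos : 0 < cP := (Finset.lt_inf'_iff _).2 fun p hp => (Finset.mem_filter.1 hp).2
  have hcPle : ∀ x y, 0 < P y x → cP ≤ P y x := fun x y h =>
    Finset.inf'_le (fun p : S × S => P p.1 p.2)
      (Finset.mem_filter.2 ⟨Finset.mem_univ ((y, x) : S × S), h⟩)
  -- epsilon
  set εf : ℕ → ℝ := fun t => Real.exp (-(L / T1 t)) with hεdef
  have hεpos : ∀ t, 0 < εf t := fun t => Real.exp_pos _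
  have hεle1 : ∀ t, εf t ≤ 1 := by
    intro t
    rw [hεdef]
    simp only
    rw [show (1:ℝ) = Real.exp 0 by simp]
    apply Real.exp_le_exp.2
    rw [neg_nonpos]
    exact div_nonneg hL1.le (hT1pos t).le
  have hεanti : ∀ s t, s ≤ t → εf t ≤ εf s := by
    intro s t h
    apply Real.exp_le_exp.2
    rw [neg_le_neg_iff]
    exact div_le_div_of_nonneg_left hL1.le (hT1pos t) (hT1anti h)
  -- off-diagonal lower bound
  have hoff : ∀ (t : ℕ) (x y : S), 0 < P y x → cP * (g 1 * (c0 * εf t)) ≤ Gp t y x := by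
    intro t x y hyx
    have hyne : y ≠ x := by
      intro h
      rw [h, hP.diag_zero] at hyx
      exact lt_irrefl 0 hyx
    rw [hGpapp, if_neg hyne]
    have hAu : A t y x = g (Real.exp ((F0 x - F0 y)/T0 + (F1 x - F1 y)/T1 t)) := by
      simp only [hA]
      rw [hqb t x y]
    set u := Real.exp ((F0 x - F0 y)/T0 + (F1 x - F1 y)/T1 t) with hu
    have hupos : 0 < u := Real.exp_pos _
    have hulow : c0 * εf t ≤ u := by
      rw [hu, Real.exp_add]
      apply mul_le_mul (hc0le x y) ?_ (hεpos t).le (Real.exp_pos _).le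
      apply Real.exp_le_exp.2
      rw [show -(L / T1 t) = (-L) / T1 t by rw [neg_div]]
      have hd := abs_le.1 (hLb x y hyx)
      exact (div_le_div_iff_of_pos_right (hT1pos t)).2 (by linarith [hd.1])
    have humin : c0 * εf t ≤ min u 1 := by
      refine le_min hulow ?_
      nlinarith [hεle1 t, hεpos t]
    calc cP * (g 1 * (c0 * εf t)) ≤ P y x * (g 1 * min u 1) := by
          apply mul_le_mul (hcPle x y hyx)
            (mul_le_mul_of_nonneg_left humin hg1.le) ?_ (hPnn y x)
          positivity
      _ ≤ P y x * g u := mul_le_mul_of_nonneg_left (hg.min_le hupos) (hPnn y x)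
      _ = P y x * A t y x := by rw [hAu]
  -- the minimizing state xs
  have hSne : {r | ∃ x, x ∉ Sm P F1 ∧ r = Finset.univ.sup fun y => dSteps P x y}.Nonempty := by
    obtain ⟨x, hx⟩ := hne
    exact ⟨_, x, hx, rfl⟩
  have hmem : R ∈ {r | ∃ x, x ∉ Sm P F1 ∧ r = Finset.univ.sup fun y => dSteps P x y} :=
    Nat.sInf_mem hSne
  obtain ⟨xs, hxsm, hxsR⟩ := hmem
  have hreachset : ∀ y, ReachIn P (dSteps P xs y) xs y := by
    intro y
    have hne2 : {n | ReachIn P n xs y}.Nonempty := by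
      obtain ⟨m, _, z, h0, hmz, hs⟩ := hP.irreducible xs y
      exact ⟨m, z, h0, hmz, hs⟩
    exact Nat.sInf_mem hne2
  have hdle : ∀ y, dSteps P xs y ≤ R := by
    intro y
    rw [hxsR]
    exact Finset.le_sup (Finset.mem_univ y)
  obtain ⟨ys, hys, hysF⟩ : ∃ y, 0 < P y xs ∧ F1 xs < F1 y := by
    by_contra h
    push_neg at h
    exact hxsm h
  have hR1 : 1 ≤ R := by
    rcases Nat.eq_zero_or_pos R with h0 | h
    · exfalso
      have hd0 : dSteps P xs ys = 0 := by
        have := hdle ys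
        omega
      obtain ⟨f, hf0, hfn, _⟩ := hreachset ys
      rw [hd0] at hfn
      rw [hf0] at hfn
      rw [← hfn, hP.diag_zero] at hys
      exact lt_irrefl 0 hys
    · exact h
  -- threshold τ for the diagonal bound
  obtain ⟨τ, hτ⟩ : ∃ τ, ∀ t ≥ τ,
      Real.exp ((F0 xs - F0 ys)/T0 + (F1 xs - F1 ys)/T1 t) < 1/2 := by
    have h1 : Tendsto (fun t => (T1 t)⁻¹) atTop atTop := by
      apply Filter.Tendsto.inv_tendsto_nhdsGT_zero
      refine tendsto_nhdsWithin_iff.2 ⟨hT1lim, Filter.Eventually.of_forall fun t => hT1pos t⟩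
    have h2 : Tendsto (fun t => (F1 ys - F1 xs) * (T1 t)⁻¹) atTop atTop :=
      h1.const_mul_atTop (by linarith)
    have h3 : Tendsto (fun t : ℕ => (F0 xs - F0 ys)/T0 + (F1 xs - F1 ys)/T1 t) atTop atBot := by
      apply tendsto_atBot_add_const_left
      have h4 : Tendsto (fun t : ℕ => -((F1 ys - F1 xs) * (T1 t)⁻¹)) atTop atBot :=
        tendsto_neg_atTop_atBot.comp h2
      convert h4 using 2 with t
      rw [div_eq_mul_inv]
      ring
    have h5 : Tendsto (fun t : ℕ =>
        Real.exp ((F0 xs - F0 ys)/T0 + (F1 xs - F1 ys)/T1 t)) atTop (nhds 0) :=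
      Real.tendsto_exp_atBot.comp h3
    have h6 := h5.eventually_lt_const (by norm_num : (0:ℝ) < 1/2)
    exact eventually_atTop.1 h6
  set cD : ℝ := P ys xs / 2 with hcDdef
  have hcDpos : 0 < cD := by rw [hcDdef]; linarith
  have hPys1 : P ys xs ≤ 1 := by
    have h1 : P ys xs ≤ ∑ y, P y xs :=
      Finset.single_le_sum (fun y _ => hPnn y xs) (Finset.mem_univ ys)
    rw [hP.sum_one] at h1
    exact h1
  have hdiag : ∀ t, τ ≤ t → cD ≤ Gp t xs xs := by
    intro t ht
    rw [hGpapp, if_pos rfl]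
    have hAle : A t ys xs ≤ 1/2 := by
      have hAu : A t ys xs = Real.exp ((F0 xs - F0 ys)/T0 + (F1 xs - F1 ys)/T1 t) →
          True := fun _ => trivial
      have hAeq : A t ys xs = g (Real.exp ((F0 xs - F0 ys)/T0 + (F1 xs - F1 ys)/T1 t)) := by
        simp only [hA]
        rw [hqb t xs ys]
      rw [hAeq]
      have h2 := hτ t ht
      exact (hg.le_self (Real.exp_pos _) (by linarith)).trans h2.le
    have hsum : ∑ z, P z xs * A t z xs ≤ (1 - P ys xs) + P ys xs * A t ys xs := by
      rw [← Finset.add_sum_erase _ _ (Finset.mem_univ ys)]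
      have h1 : ∑ z ∈ Finset.univ.erase ys, P z xs * A t z xs
          ≤ ∑ z ∈ Finset.univ.erase ys, P z xs :=
        Finset.sum_le_sum fun z _ => mul_le_of_le_one_right (hPnn z xs) (hA01 t z xs).2
      have h2 : ∑ z ∈ Finset.univ.erase ys, P z xs = 1 - P ys xs := by
        rw [Finset.sum_erase_eq_sub (Finset.mem_univ ys), hP.sum_one]
      linarith
    have h3 : P ys xs * A t ys xs ≤ P ys xs * (1/2) :=
      mul_le_mul_of_nonneg_left hAle (hPnn _ _)
    rw [hcDdef]
    linarith
  set c : ℝ := min (cP * (g 1 * c0)) cD with hcdef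
  have hcpos : 0 < c := lt_min (by positivity) hcDpos
  have hcle1 : c ≤ 1 := by
    have := min_le_right (cP * (g 1 * c0)) cD
    rw [hcDdef] at this
    rw [hcdef, hcDdef]
    have := min_le_right (cP * (g 1 * c0)) (P ys xs / 2)
    linarith
  -- the block bound
  have hblock : ∀ b, τ ≤ b → ∀ x, (c * εf (b + R))^R ≤ (prodG Gp (b + R) b) xs x := by
    intro b hb x
    have hdR : dSteps P xs x ≤ R := hdle x
    obtain ⟨f, hf0, hfd, hfs⟩ := (hreachset x).symm hP.symm
    set d := dSteps P xs x with hd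
    set z : ℕ → S := fun k => f (min k d) with hz
    have hz0 : z 0 = x := by simp [hz, hf0]
    have hzR : z R = xs := by
      rw [hz]
      simp only
      rw [min_eq_right hdR, hfd]
    have hstep : ∀ k ∈ Finset.range R, c * εf (b + R) ≤ Gp (b + k) (z (k+1)) (z k) := by
      intro k hk
      rw [Finset.mem_range] at hk
      by_cases hkd : k < d
      · have h1 : min (k+1) d = k+1 := min_eq_left (by omega)
        have h2 : min k d = k := min_eq_left (by omega)
        have hstep' : 0 < P (z (k+1)) (z k) := by
          rw [hz]
          simp only
          rw [h1, h2]
          exact hfs k hkd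
        calc c * εf (b + R) ≤ c * εf (b + k) :=
              mul_le_mul_of_nonneg_left (hεanti _ _ (by omega)) hcpos.le
          _ ≤ (cP * (g 1 * c0)) * εf (b + k) :=
              mul_le_mul_of_nonneg_right (min_le_left _ _) (hεpos _).le
          _ = cP * (g 1 * (c0 * εf (b + k))) := by ring
          _ ≤ Gp (b + k) (z (k+1)) (z k) := hoff _ _ _ hstep'
      · have h1 : min (k+1) d = d := min_eq_right (by omega)
        have h2 : min k d = d := min_eq_right (by omega)
        have hz1 : z (k+1) = xs := by rw [hz]; simp only; rw [h1, hfd]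
        have hz2 : z k = xs := by rw [hz]; simp only; rw [h2, hfd]
        rw [hz1, hz2]
        calc c * εf (b + R) ≤ c * 1 := mul_le_mul_of_nonneg_left (hεle1 _) hcpos.le
          _ = c := mul_one c
          _ ≤ cD := min_le_right _ _
          _ ≤ Gp (b + k) xs xs := hdiag _ (by omega)
    calc (c * εf (b + R))^R = ∏ _k ∈ Finset.range R, (c * εf (b + R)) := by
          rw [Finset.prod_const, Finset.card_range]
      _ ≤ ∏ k ∈ Finset.range R, Gp (b + k) (z (k+1)) (z k) :=
          Finset.prod_le_prod (fun k _ => by positivity) hstep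
      _ ≤ (prodG Gp (b + R) b) (z R) (z 0) := prod_entry_ge Gp hGpS b z R
      _ = (prodG Gp (b + R) b) xs x := by rw [hzR, hz0]
  -- schedule bound
  have hsch2 : ∀ t : ℕ, ((t:ℝ) + 2)⁻¹ ≤ εf t ^ R := by
    intro t
    have ht2 : (1:ℝ) < (t:ℝ) + 2 := by
      have : (0:ℝ) ≤ (t:ℝ) := Nat.cast_nonneg t
      linarith
    have hlog : 0 < Real.log ((t:ℝ) + 2) := Real.log_pos ht2
    have hs := hsched t
    rw [ge_iff_le, div_le_iff₀ hlog] at hs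
    have h2 : -(Real.log ((t:ℝ) + 2)) ≤ -(L / T1 t) * R := by
      rw [neg_mul, neg_le_neg_iff, div_mul_eq_mul_div, div_le_iff₀ (hT1pos t)]
      nlinarith [hs]
    calc ((t:ℝ) + 2)⁻¹ = Real.exp (-(Real.log ((t:ℝ) + 2))) := by
          rw [Real.exp_neg, Real.exp_log (by linarith)]
      _ ≤ Real.exp (-(L / T1 t) * R) := Real.exp_le_exp.2 h2
      _ = εf t ^ R := by rw [mul_comm, Real.exp_nat_mul]
  -- main argument
  intro t0 ε hε
  set a : ℕ := max t0 τ with hadef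
  set δf : ℕ → ℝ := fun k => (c * εf (a + (k+1)*R))^R with hδfdef
  have hδ0 : ∀ k, 0 ≤ δf k := fun k => by positivity
  have hδ1 : ∀ k, δf k ≤ 1 := by
    intro k
    apply pow_le_one₀ (by positivity)
    nlinarith [hεle1 (a + (k+1)*R), hεpos (a + (k+1)*R)]
  have hδlow : ∀ k : ℕ, (c^R * ((a:ℝ) + (R:ℝ) + 2)⁻¹) * ((k:ℝ) + 1)⁻¹ ≤ δf k := by
    intro k
    have h1 : ((a + (k+1)*R : ℕ):ℝ) + 2 ≤ (((a:ℝ) + (R:ℝ) + 2)) * ((k:ℝ) + 1) := by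
      push_cast
      have hk0 : (0:ℝ) ≤ (k:ℝ) := Nat.cast_nonneg k
      have ha0 : (0:ℝ) ≤ (a:ℝ) := Nat.cast_nonneg a
      have hR0 : (0:ℝ) ≤ (R:ℝ) := Nat.cast_nonneg R
      nlinarith [mul_nonneg ha0 hk0, hk0]
    calc (c^R * ((a:ℝ) + (R:ℝ) + 2)⁻¹) * ((k:ℝ) + 1)⁻¹
        = c^R * ((((a:ℝ) + (R:ℝ) + 2)) * ((k:ℝ) + 1))⁻¹ := by
          rw [mul_inv]
          ring
      _ ≤ c^R * (((a + (k+1)*R : ℕ):ℝ) + 2)⁻¹ := by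
          apply mul_le_mul_of_nonneg_left _ (by positivity)
          apply inv_anti₀ (by positivity) h1
      _ ≤ c^R * εf (a + (k+1)*R) ^ R :=
          mul_le_mul_of_nonneg_left (hsch2 _) (by positivity)
      _ = δf k := (mul_pow _ _ _).symm
  have hsumtend : Tendsto (fun n => ∑ k ∈ Finset.range n, δf k) atTop atTop := by
    have hC : 0 < c^R * ((a:ℝ) + (R:ℝ) + 2)⁻¹ := by positivity
    have h1 : Tendsto (fun n => ∑ k ∈ Finset.range n,
        (c^R * ((a:ℝ) + (R:ℝ) + 2)⁻¹) * ((k:ℝ) + 1)⁻¹) atTop atTop := by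
      simp only [← Finset.mul_sum]
      apply Tendsto.const_mul_atTop hC
      have := Real.tendsto_sum_range_one_div_nat_succ_atTop
      convert this using 2 with n
      apply Finset.sum_congr rfl
      intro k _
      rw [one_div]
    exact tendsto_atTop_mono
      (fun n => Finset.sum_le_sum fun k _ => hδlow k) h1
  have h2tend : Tendsto (fun n => 2 * Real.exp (-(∑ k ∈ Finset.range n, δf k)))
      atTop (nhds 0) := by
    have h3 := Real.tendsto_exp_atBot.comp (tendsto_neg_atTop_atBot.comp hsumtend)
    have h4 := h3.const_mul (2:ℝ)
    simpa using h4
  obtain ⟨n, hn⟩ := (h2tend.eventually_lt_const hε).exists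
  refine ⟨a + n*R, fun t ht p0 p0' hp0 hp0' => ?_⟩
  set v : S → ℝ := fun x => p0 x - p0' x with hv
  have hv0 : ∑ x, v x = 0 := by
    simp only [hv]
    rw [Finset.sum_sub_distrib, hp0.2, hp0'.2, sub_self]
  have hv2 : ∑ x, |v x| ≤ 2 := by
    calc ∑ x, |v x| ≤ ∑ x, (p0 x + p0' x) := by
          apply Finset.sum_le_sum
          intro x _
          simp only [hv]
          calc |p0 x - p0' x| ≤ |p0 x| + |p0' x| := abs_sub _ _
            _ = p0 x + p0' x := by
                rw [abs_of_nonneg (hp0.1 x), abs_of_nonneg (hp0'.1 x)]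
      _ = 2 := by rw [Finset.sum_add_distrib, hp0.2, hp0'.2]; norm_num
  have hdist : ∀ M : Matrix S S ℝ,
      dist1 (M.mulVec p0) (M.mulVec p0') = ∑ y, |M.mulVec v y| := by
    intro M
    unfold dist1
    apply Finset.sum_congr rfl
    intro y _
    congr 1
    simp only [Matrix.mulVec, dotProduct, hv, mul_sub]
    rw [Finset.sum_sub_distrib]
  have ht0a : t0 ≤ a := le_max_left t0 τ
  have hτa : τ ≤ a := le_max_right t0 τ
  have key : ∀ m, (∑ y, (prodG Gp (a + m*R) t0).mulVec v y = 0) ∧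
      ∑ y, |(prodG Gp (a + m*R) t0).mulVec v y|
        ≤ (∏ k ∈ Finset.range m, (1 - δf k)) * ∑ x, |v x| := by
    intro m
    induction m with
    | zero =>
      have hst := prodG_stochastic Gp hGpS (a + 0*R) t0
      refine ⟨mulVec_sum_zero hst hv0, ?_⟩
      have := contraction (δ := 0) (xs := xs) hst le_rfl (fun x => hst.1 xs x) hv0
      simpa using this
    | succ m ih =>
      have hbm : τ ≤ a + m*R := le_trans hτa (Nat.le_add_right _ _)
      have heq : a + (m+1)*R = (a + m*R) + R := by ring
      have hdecomp : prodG Gp (a + (m+1)*R) t0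
          = prodG Gp ((a + m*R) + R) (a + m*R) * prodG Gp (a + m*R) t0 := by
        rw [heq]
        exact prodG_mul Gp (le_trans ht0a (Nat.le_add_right _ _)) (Nat.le_add_right _ _)
      have hMstoch := prodG_stochastic Gp hGpS ((a + m*R) + R) (a + m*R)
      have hrow : ∀ x, δf m ≤ (prodG Gp ((a + m*R) + R) (a + m*R)) xs x := by
        intro x
        have hb := hblock (a + m*R) hbm x
        rw [hδfdef]
        simp only
        rw [heq]
        exact hb
      constructor
      · rw [hdecomp, ← Matrix.mulVec_mulVec]
        exact mulVec_sum_zero hMstoch ih.1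
      · rw [hdecomp, ← Matrix.mulVec_mulVec]
        calc ∑ y, |(prodG Gp ((a + m*R) + R) (a + m*R)).mulVec
              ((prodG Gp (a + m*R) t0).mulVec v) y|
            ≤ (1 - δf m) * ∑ y, |(prodG Gp (a + m*R) t0).mulVec v y| :=
              contraction hMstoch (hδ0 m) hrow ih.1
          _ ≤ (1 - δf m) * ((∏ k ∈ Finset.range m, (1 - δf k)) * ∑ x, |v x|) :=
              mul_le_mul_of_nonneg_left ih.2 (by linarith [hδ1 m])
          _ = (∏ k ∈ Finset.range (m+1), (1 - δf k)) * ∑ x, |v x| := by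
              rw [Finset.prod_range_succ]
              ring
  have hfinal : prodG Gp t t0 = prodG Gp t (a + n*R) * prodG Gp (a + n*R) t0 :=
    prodG_mul Gp (le_trans ht0a (Nat.le_add_right _ _)) ht
  rw [hdist, hfinal, ← Matrix.mulVec_mulVec]
  have hlast := contraction (δ := 0) (xs := xs) (prodG_stochastic Gp hGpS t (a + n*R))
    le_rfl (fun x => (prodG_stochastic Gp hGpS t (a + n*R)).1 xs x) (key n).1
  have hprodle : ∏ k ∈ Finset.range n, (1 - δf k)
      ≤ Real.exp (-(∑ k ∈ Finset.range n, δf k)) := by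
    calc ∏ k ∈ Finset.range n, (1 - δf k)
        ≤ ∏ k ∈ Finset.range n, Real.exp (-(δf k)) :=
          Finset.prod_le_prod (fun k _ => by linarith [hδ1 k])
            (fun k _ => by linarith [Real.add_one_le_exp (-(δf k))])
      _ = Real.exp (∑ k ∈ Finset.range n, -(δf k)) := (Real.exp_sum _ _).symm
      _ = Real.exp (-(∑ k ∈ Finset.range n, δf k)) := by rw [Finset.sum_neg_distrib]
  have hprodnn : 0 ≤ ∏ k ∈ Finset.range n, (1 - δf k) :=
    Finset.prod_nonneg fun k _ => by linarith [hδ1 k]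
  calc ∑ y, |(prodG Gp t (a + n*R)).mulVec ((prodG Gp (a + n*R) t0).mulVec v) y|
      ≤ (1 - 0) * ∑ y, |(prodG Gp (a + n*R) t0).mulVec v y| := hlast
    _ = ∑ y, |(prodG Gp (a + n*R) t0).mulVec v y| := by ring
    _ ≤ (∏ k ∈ Finset.range n, (1 - δf k)) * ∑ x, |v x| := (key n).2
    _ ≤ (∏ k ∈ Finset.range n, (1 - δf k)) * 2 :=
        mul_le_mul_of_nonneg_left hv2 hprodnn
    _ ≤ Real.exp (-(∑ k ∈ Finset.range n, δf k)) * 2 :=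
        mul_le_mul_of_nonneg_right hprodle (by norm_num)
    _ = 2 * Real.exp (-(∑ k ∈ Finset.range n, δf k)) := mul_comm _ _
    _ ≤ ε := hn.le


end QAPaper
end
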